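/- Let the ground cost on Ω = X × Y be c((x,y),(x',y')) = ‖x − x'‖² + ρ(y,y')², where ρ is a metric on Y. Let P = ∑ᵢ πᵢ^P (Pᵢ ⊗ δ_{νᵢ^P}) and Q = ∑ⱼ πⱼ^Q (Qⱼ ⊗ δ_{νⱼ^Q}) be finite mixtures where Pᵢ, Qⱼ are probability measures on X and νᵢ^P, νⱼ^Q ∈ Y. Then the mixture optimal transport cost min_{ω ∈ Γ(π^P, π^Q)} ∑ᵢⱼ ωᵢⱼ · OT_c(Pᵢ ⊗ δ_{νᵢ^P}, Qⱼ ⊗ δ_{νⱼ^Q}) equals min_{ω ∈ Γ(π^P, π^Q)} ∑ᵢⱼ ωᵢⱼ (W₂(Pᵢ, Qⱼ)² + ρ(νᵢ^P, νⱼ^Q)²), i.e., the transport cost between component (i,j) decomposes as the feature Wasserstein cost plus the label distance squared. -/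

import Mathlib

open MeasureTheory Finset

/-- The squared 2-Wasserstein distance, defined via the Kantorovich problem. -/
noncomputable def W2sq {X : Type*} [MeasurableSpace X] [PseudoMetricSpace X]
    (P Q : Measure X) : ℝ :=
  sInf {c | ∃ γ : Measure (X × X), γ.map Prod.fst = P ∧ γ.map Prod.snd = Q ∧
    c = ∫ p, dist p.1 p.2 ^ 2 ∂γ}

/-- The Kantorovich optimal transport cost on `X × Y` with ground cost
`c((x,y),(x',y')) = dist(x,x')² + ρ(y,y')²`. -/
noncomputable def OTc {X Y : Type*} [MeasurableSpace X] [PseudoMetricSpace X]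
    [MeasurableSpace Y] [PseudoMetricSpace Y]
    (μ ν : Measure (X × Y)) : ℝ :=
  sInf {c | ∃ γ : Measure ((X × Y) × (X × Y)), γ.map Prod.fst = μ ∧ γ.map Prod.snd = ν ∧
    c = ∫ p, (dist p.1.1 p.2.1 ^ 2 + dist p.1.2 p.2.2 ^ 2) ∂γ}

/-
A coupling of `P ⊗ δ_a` and `Q ⊗ δ_b` is concentrated on pairs with labels exactly `(a, b)`, so
it is the image of its feature coupling (a coupling of `P` and `Q`) under
`(x, x') ↦ ((x, a), (x', b))`, and every coupling of `P` and `Q` lifts this way. Along the lift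
the ground cost is `‖x - x'‖² + ρ(a, b)²`, so the feasible costs of the two Kantorovich problems
differ by the constant `ρ(a, b)²`, whence `OT_c(P ⊗ δ_a, Q ⊗ δ_b) = W₂(P, Q)² + ρ(a, b)²`.
The mixture costs then agree termwise.
-/

theorem memLp_two_of_integrable_norm_sq {E : Type*} [NormedAddCommGroup E] [MeasurableSpace E]
    [OpensMeasurableSpace E] [SecondCountableTopology E] {P : Measure E}
    (hP : Integrable (fun x => ‖x‖ ^ 2) P) : MemLp id 2 P :=
  (memLp_two_iff_integrable_sq_norm aestronglyMeasurable_id).2 hP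

theorem integrable_dist_sq_of_map {E : Type*} [NormedAddCommGroup E] [MeasurableSpace E]
    [OpensMeasurableSpace E] [SecondCountableTopology E] {γ : Measure (E × E)}
    (h₁ : Integrable (fun x => ‖x‖ ^ 2) (γ.map Prod.fst))
    (h₂ : Integrable (fun x => ‖x‖ ^ 2) (γ.map Prod.snd)) :
    Integrable (fun p => dist p.1 p.2 ^ 2) γ := by
  have hfst : MemLp Prod.fst 2 γ :=
    (memLp_map_measure_iff aestronglyMeasurable_id measurable_fst.aemeasurable).1
      (memLp_two_of_integrable_norm_sq h₁)
  have hsnd : MemLp Prod.snd 2 γ :=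
    (memLp_map_measure_iff aestronglyMeasurable_id measurable_snd.aemeasurable).1
      (memLp_two_of_integrable_norm_sq h₂)
  simpa only [dist_eq_norm, Pi.sub_apply] using (hfst.sub hsnd).integrable_norm_pow two_ne_zero

section Labels

variable {E Y : Type*} [MeasurableSpace E] [MeasurableSpace Y]

theorem map_prodMap_fst_marginals {γ : Measure ((E × Y) × (E × Y))} {P Q : Measure E} {a b : Y}
    (h₁ : γ.map Prod.fst = P.prod (Measure.dirac a))
    (h₂ : γ.map Prod.snd = Q.prod (Measure.dirac b)) :
    (γ.map (Prod.map Prod.fst Prod.fst)).map Prod.fst = P ∧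
      (γ.map (Prod.map Prod.fst Prod.fst)).map Prod.snd = Q := by
  have hm : Measurable (Prod.map Prod.fst Prod.fst : (E × Y) × (E × Y) → E × E) :=
    measurable_fst.prodMap measurable_fst
  constructor
  · rw [Measure.map_map measurable_fst hm, Prod.map_fst',
      ← Measure.map_map measurable_fst measurable_fst, h₁]
    simp
  · rw [Measure.map_map measurable_snd hm, Prod.map_snd',
      ← Measure.map_map measurable_fst measurable_snd, h₂]
    simp

variable [MeasurableSingletonClass Y]

theorem ae_prod_dirac_snd_eq (P : Measure E) [SFinite P] (a : Y) :
    ∀ᵐ z ∂P.prod (Measure.dirac a), z.2 = a := by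
  rw [Measure.prod_dirac]
  exact (ae_map_iff measurable_prodMk_right.aemeasurable
    (measurable_snd (measurableSet_singleton a))).2 (ae_of_all _ fun _ => rfl)

theorem measurableEmbedding_label (a b : Y) :
    MeasurableEmbedding (Prod.map (fun x : E => (x, a)) (fun x : E => (x, b))) :=
  (measurableEmbedding_prod_mk_right a).prodMap (measurableEmbedding_prod_mk_right b)

theorem map_label_map_prodMap_fst_eq {γ : Measure ((E × Y) × (E × Y))} {P Q : Measure E}
    [SFinite P] [SFinite Q] {a b : Y} (h₁ : γ.map Prod.fst = P.prod (Measure.dirac a))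
    (h₂ : γ.map Prod.snd = Q.prod (Measure.dirac b)) :
    (γ.map (Prod.map Prod.fst Prod.fst)).map (Prod.map (fun x : E => (x, a)) (fun x => (x, b))) =
      γ := by
  have ha : ∀ᵐ p ∂γ, p.1.2 = a :=
    ae_of_ae_map measurable_fst.aemeasurable (h₁ ▸ ae_prod_dirac_snd_eq P a)
  have hb : ∀ᵐ p ∂γ, p.2.2 = b :=
    ae_of_ae_map measurable_snd.aemeasurable (h₂ ▸ ae_prod_dirac_snd_eq Q b)
  rw [Measure.map_map (measurableEmbedding_label a b).measurable
    (measurable_fst.prodMap measurable_fst)]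
  conv_rhs => rw [← Measure.map_id (μ := γ)]
  refine Measure.map_congr ?_
  filter_upwards [ha, hb] with p ha hb
  ext <;> simp [ha, hb]

theorem map_label_marginals (γ : Measure (E × E)) [SFinite γ] (a b : Y) :
    (γ.map (Prod.map (fun x : E => (x, a)) (fun x => (x, b)))).map Prod.fst =
        (γ.map Prod.fst).prod (Measure.dirac a) ∧
      (γ.map (Prod.map (fun x : E => (x, a)) (fun x => (x, b)))).map Prod.snd =
        (γ.map Prod.snd).prod (Measure.dirac b) := by
  have hm := (measurableEmbedding_label (E := E) a b).measurable
  constructor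
  · rw [Measure.map_map measurable_fst hm, Prod.map_fst', Measure.prod_dirac,
      Measure.map_map measurable_prodMk_right measurable_fst]
  · rw [Measure.map_map measurable_snd hm, Prod.map_snd', Measure.prod_dirac,
      Measure.map_map measurable_prodMk_right measurable_snd]

end Labels

theorem integral_map_label {E Y : Type*} [PseudoMetricSpace E] [MeasurableSpace E]
    [PseudoMetricSpace Y] [MeasurableSpace Y] [MeasurableSingletonClass Y]
    (γ : Measure (E × E)) [IsProbabilityMeasure γ]
    (hγ : Integrable (fun q => dist q.1 q.2 ^ 2) γ) (a b : Y) :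
    ∫ p, (dist p.1.1 p.2.1 ^ 2 + dist p.1.2 p.2.2 ^ 2)
        ∂γ.map (Prod.map (fun x : E => (x, a)) (fun x => (x, b))) =
      ∫ q, dist q.1 q.2 ^ 2 ∂γ + dist a b ^ 2 := by
  rw [(measurableEmbedding_label a b).integral_map]
  simp only [Prod.map_fst, Prod.map_snd]
  rw [integral_add hγ (integrable_const _), integral_const]
  simp

theorem OTc_prod_dirac {E Y : Type*} [NormedAddCommGroup E] [MeasurableSpace E]
    [OpensMeasurableSpace E] [SecondCountableTopology E]
    [PseudoMetricSpace Y] [MeasurableSpace Y] [MeasurableSingletonClass Y]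
    (P Q : Measure E) [IsProbabilityMeasure P] [IsProbabilityMeasure Q]
    (hP : Integrable (fun x => ‖x‖ ^ 2) P) (hQ : Integrable (fun x => ‖x‖ ^ 2) Q) (a b : Y) :
    OTc (P.prod (Measure.dirac a)) (Q.prod (Measure.dirac b)) = W2sq P Q + dist a b ^ 2 := by
  set S := {c | ∃ γ : Measure (E × E), γ.map Prod.fst = P ∧ γ.map Prod.snd = Q ∧
    c = ∫ p, dist p.1 p.2 ^ 2 ∂γ}
  have isProbability {γ : Measure (E × E)} (h₁ : γ.map Prod.fst = P) :
      IsProbabilityMeasure γ :=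
    (Measure.isProbabilityMeasure_map_iff measurable_fst.aemeasurable).1 (h₁ ▸ inferInstance)
  have integral_eq {γ : Measure (E × E)} (h₁ : γ.map Prod.fst = P)
      (h₂ : γ.map Prod.snd = Q) :=
    have := isProbability h₁
    integral_map_label γ (integrable_dist_sq_of_map (h₁ ▸ hP) (h₂ ▸ hQ)) a b
  have hcosts : {c | ∃ γ : Measure ((E × Y) × (E × Y)),
      γ.map Prod.fst = P.prod (Measure.dirac a) ∧ γ.map Prod.snd = Q.prod (Measure.dirac b) ∧
      c = ∫ p, (dist p.1.1 p.2.1 ^ 2 + dist p.1.2 p.2.2 ^ 2) ∂γ} =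
      (· + dist a b ^ 2) '' S := by
    ext c
    constructor
    · rintro ⟨γ, h₁, h₂, rfl⟩
      obtain ⟨h₁', h₂'⟩ := map_prodMap_fst_marginals h₁ h₂
      refine ⟨_, ⟨_, h₁', h₂', rfl⟩, ?_⟩
      dsimp only
      rw [← integral_eq h₁' h₂', map_label_map_prodMap_fst_eq h₁ h₂]
    · rintro ⟨_, ⟨γ, h₁, h₂, rfl⟩, rfl⟩
      have := isProbability h₁
      obtain ⟨h₁', h₂'⟩ := map_label_marginals γ a b
      exact ⟨_, h₁' ▸ h₁ ▸ rfl, h₂' ▸ h₂ ▸ rfl, (integral_eq h₁ h₂).symm⟩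
  have hS : S.Nonempty := ⟨_, P.prod Q, by simp, by simp, rfl⟩
  have hS_bdd : BddBelow S := ⟨0, by rintro _ ⟨γ, -, -, rfl⟩; positivity⟩
  rw [OTc, hcosts, W2sq]
  exact ((OrderIso.addRight _).map_csInf' hS hS_bdd).symm

theorem mixture_OT_decomposition_general {dim n m : ℕ} {Y : Type*} [MetricSpace Y]
    [MeasurableSpace Y] [MeasurableSingletonClass Y]
    (Pm : Fin n → Measure (EuclideanSpace ℝ (Fin dim)))
    (Qm : Fin m → Measure (EuclideanSpace ℝ (Fin dim)))
    (hPm : ∀ i, IsProbabilityMeasure (Pm i)) (hQm : ∀ j, IsProbabilityMeasure (Qm j))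
    (hPm2 : ∀ i, Integrable (fun x => ‖x‖ ^ 2) (Pm i))
    (hQm2 : ∀ j, Integrable (fun x => ‖x‖ ^ 2) (Qm j))
    (νP : Fin n → Y) (νQ : Fin m → Y)
    (πP : Fin n → ℝ) (πQ : Fin m → ℝ) :
    let Γ : Set (Matrix (Fin n) (Fin m) ℝ) :=
      {ω | (∀ i j, 0 ≤ ω i j) ∧ (∀ i, ∑ j, ω i j = πP i) ∧ (∀ j, ∑ i, ω i j = πQ j)}
    sInf {c | ∃ ω ∈ Γ, c = ∑ i, ∑ j, ω i j *
        OTc ((Pm i).prod (Measure.dirac (νP i))) ((Qm j).prod (Measure.dirac (νQ j)))} =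
    sInf {c | ∃ ω ∈ Γ, c = ∑ i, ∑ j, ω i j *
        (W2sq (Pm i) (Qm j) + dist (νP i) (νQ j) ^ 2)} := by
  intro Γ
  simp only [fun i j => OTc_prod_dirac (Pm i) (Qm j) (hPm2 i) (hQm2 j) (νP i) (νQ j)]

/-- For labeled mixtures with components `Pᵢ ⊗ δ_{νᵢ}` and `Qⱼ ⊗ δ_{νⱼ'}`, the mixture optimal
transport cost with the ground cost `‖x−x'‖² + ρ(y,y')²` decomposes component-wise as the
feature Wasserstein cost plus the squared label distance (Proposition 1). -/
theorem mixture_OT_decomposition {dim n m : ℕ} {Y : Type*} [MetricSpace Y]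
    [MeasurableSpace Y] [MeasurableSingletonClass Y] [OpensMeasurableSpace Y]
    (Pm : Fin n → Measure (EuclideanSpace ℝ (Fin dim)))
    (Qm : Fin m → Measure (EuclideanSpace ℝ (Fin dim)))
    (hPm : ∀ i, IsProbabilityMeasure (Pm i)) (hQm : ∀ j, IsProbabilityMeasure (Qm j))
    (hPm2 : ∀ i, Integrable (fun x => ‖x‖ ^ 2) (Pm i))
    (hQm2 : ∀ j, Integrable (fun x => ‖x‖ ^ 2) (Qm j))
    (νP : Fin n → Y) (νQ : Fin m → Y)
    (πP : Fin n → ℝ) (πQ : Fin m → ℝ)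
    (hπP : ∀ i, 0 ≤ πP i) (hπQ : ∀ j, 0 ≤ πQ j)
    (hπP1 : ∑ i, πP i = 1) (hπQ1 : ∑ j, πQ j = 1) :
    let Γ : Set (Matrix (Fin n) (Fin m) ℝ) :=
      {ω | (∀ i j, 0 ≤ ω i j) ∧ (∀ i, ∑ j, ω i j = πP i) ∧ (∀ j, ∑ i, ω i j = πQ j)}
    sInf {c | ∃ ω ∈ Γ, c = ∑ i, ∑ j, ω i j *
        OTc ((Pm i).prod (Measure.dirac (νP i))) ((Qm j).prod (Measure.dirac (νQ j)))} =
    sInf {c | ∃ ω ∈ Γ, c = ∑ i, ∑ j, ω i j *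
        (W2sq (Pm i) (Qm j) + dist (νP i) (νQ j) ^ 2)} :=
  mixture_OT_decomposition_general Pm Qm hPm hQm hPm2 hQm2 νP νQ πP πQ
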